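/- arXiv:math/0406610 — 2 statements merged into one kernel-verified Lean document; each statement's English description precedes it below -/
import Mathlib

section
/- The square of the Bernoulli generating function satisfies b(x)^2 = (1 - x)·b(x) - x·b'(x), where b(x) = x/(e^x - 1) is regarded as a formal power series (equivalently, as an identity of functions wherever defined), and b' denotes the derivative. -/
open PowerSeries

/-!
Write `b` for the Bernoulli series and `E = eˣ - 1`, so that `b E = X`. Differentiating gives
`b' E + b (E + 1) = 1`, and a linear combination of these two relations shows that both sides of
the identity agree after multiplication by `E`. Multiplying once more by `b` turns `E` into `X`,
which can be cancelled.
-/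

namespace PowerSeries

variable (A : Type*) [CommRing A] [Algebra ℚ A]

theorem derivative_bernoulliPowerSeries_mul_exp_sub_one :
    d⁄dX A (bernoulliPowerSeries A) * (exp A - 1) + bernoulliPowerSeries A * exp A = 1 := by
  have h := congrArg (d⁄dX A) (bernoulliPowerSeries_mul_exp_sub_one A)
  rw [Derivation.leibniz, map_sub, derivative_exp, derivative_one, sub_zero, derivative_X,
    smul_eq_mul, smul_eq_mul] at h
  linear_combination h

theorem mul_exp_sub_one_cancel {f g : A⟦X⟧} (h : f * (exp A - 1) = g * (exp A - 1)) : f = g := by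
  apply mul_X_cancel
  rw [← bernoulliPowerSeries_mul_exp_sub_one A, ← mul_assoc, ← mul_assoc, mul_right_comm f,
    mul_right_comm g, h]

theorem bernoulliPowerSeries_sq_eq :
    bernoulliPowerSeries A ^ 2
      = (1 - X) * bernoulliPowerSeries A - X * d⁄dX A (bernoulliPowerSeries A) := by
  apply mul_exp_sub_one_cancel A
  linear_combination (bernoulliPowerSeries A - 1) * bernoulliPowerSeries_mul_exp_sub_one A
    + X * derivative_bernoulliPowerSeries_mul_exp_sub_one A

end PowerSeries

/-- The Bernoulli generating function `b(x) = x/(e^x - 1)` (as a formal power series,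
i.e. `∑ B_n xⁿ/n!`) satisfies `b(x)² = (1 - x)·b(x) - x·b'(x)`. -/
theorem bernoulliPowerSeries_sq :
    (bernoulliPowerSeries ℚ) ^ 2
      = (1 - X) * bernoulliPowerSeries ℚ - X * (bernoulliPowerSeries ℚ).derivativeFun :=
  bernoulliPowerSeries_sq_eq ℚ
end

section
/- For every integer n ≥ 2: ∑_{k=1}^{n} B_{2k}·B_{2n-2k} = (1/(n+1))·∑_{k=1}^{n} C(2n+2, 2k+2)·B_{2k}·B_{2n-2k} + 2n·B_{2n}, where C(2n+2,2k+2) is the binomial coefficient. (This is the p = 1 case of the one-parameter generalization of Miki's identity.) -/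
/-!
Write `B(z) = z / (eᶻ - 1) = ∑ Bₙ zⁿ / n!`. Multiplying
`e^{x+y} - 1 = (eˣ - 1)(eʸ - 1) + (eˣ - 1) + (eʸ - 1)` by `B(x) B(y) B(x + y)` gives
`(x + y) B(x) B(y) = (xy + y B(x) + x B(y)) B(x + y)`. Take the coefficients of `xᵃ yᵇ` with
`a + b = M`, weight them by `a! b!` and add them up. Since
`∑ⱼ C(m, j) (a + j)! (b + m - j)! = (m + a + b + 1)! a! b! / (a + b + 1)!` (a beta integral),
the left side becomes `(M + 2) ∑ Bᵢ B_{M-i}` and the right side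
`2 ∑ C(M + 2, i + 2) Bᵢ B_{M-i} + C(M + 2, 3) B_{M-1}`. For `M = 2n` with `n ≥ 2` only even
indices contribute, and splitting off the term `i = 0` leaves the theorem.
-/

open PowerSeries Nat Finset

section GeneratingFunction

variable {A : Type*} [CommRing A] [Algebra ℚ A]

theorem coeff_rescale_bernoulliPowerSeries (a : A) (n : ℕ) :
    coeff n (rescale a (bernoulliPowerSeries A)) =
      algebraMap ℚ A (bernoulli n / n !) * a ^ n := by
  rw [coeff_rescale, bernoulliPowerSeries, coeff_mk, mul_comm]

theorem rescale_bernoulliPowerSeries_mul_rescale_exp_sub_one (a : A) :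
    rescale a (bernoulliPowerSeries A) * (rescale a (exp A) - 1) = C a * X := by
  rw [← rescale_X, ← bernoulliPowerSeries_mul_exp_sub_one, map_mul, map_sub, map_one]

theorem rescale_exp_sub_one_ne_zero [IsDomain A] {a : A} (ha : a ≠ 0) :
    rescale a (exp A) - 1 ≠ 0 := fun h => ha <| by
  simpa [coeff_rescale] using congrArg (coeff 1) h

/-- The two-variable identity for `x = u t`, `y = v t`, divided by `t`. -/
theorem C_add_mul_rescale_bernoulliPowerSeries_mul [IsDomain A] {u v : A} (hu : u ≠ 0)
    (hv : v ≠ 0) :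
    C (u + v) * (rescale u (bernoulliPowerSeries A) * rescale v (bernoulliPowerSeries A)) =
      (C (u * v) * X + C v * rescale u (bernoulliPowerSeries A)
        + C u * rescale v (bernoulliPowerSeries A)) * rescale (u + v) (bernoulliPowerSeries A) := by
  set P := rescale u (bernoulliPowerSeries A)
  set Q := rescale v (bernoulliPowerSeries A)
  set R := rescale (u + v) (bernoulliPowerSeries A)
  set Eu := rescale u (exp A) - 1
  set Ev := rescale v (exp A) - 1
  have hP : P * Eu = C u * X := rescale_bernoulliPowerSeries_mul_rescale_exp_sub_one u
  have hQ : Q * Ev = C v * X := rescale_bernoulliPowerSeries_mul_rescale_exp_sub_one v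
  have hR : R * (Eu * Ev + Eu + Ev) = C (u + v) * X := by
    rw [← rescale_bernoulliPowerSeries_mul_rescale_exp_sub_one, ← exp_mul_exp_eq_exp_add]
    ring
  apply mul_right_cancel₀ (mul_ne_zero (rescale_exp_sub_one_ne_zero hu)
    (rescale_exp_sub_one_ne_zero hv))
  simp only [map_add, map_mul] at hR ⊢
  linear_combination (C u + C v) * Q * Ev * hP + (C u + C v) * C u * X * hQ - R * C v * Ev * hP
    - R * C u * Eu * hQ - C u * C v * X * hR

end GeneratingFunction

/-- `U ^ a * V ^ b ↦ a! b!`. Applied to the coefficient of `tᴹ` of a series in `x = U t`,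
`y = V t`, it forms `∑_{a+b=M} a! b! [xᵃ yᵇ]`. -/
noncomputable def factorialWeight : MvPolynomial (Fin 2) ℚ →ₗ[ℚ] ℚ :=
  Finsupp.linearCombination ℚ (fun d : Fin 2 →₀ ℕ => ((d 0)! * (d 1)! : ℚ)) ∘ₗ
    (AddMonoidAlgebra.coeffLinearEquiv ℚ).toLinearMap

section FactorialWeight

local notation "U" => (MvPolynomial.X 0 : MvPolynomial (Fin 2) ℚ)
local notation "V" => (MvPolynomial.X 1 : MvPolynomial (Fin 2) ℚ)
local notation "𝔹" => bernoulliPowerSeries (MvPolynomial (Fin 2) ℚ)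

theorem factorialWeight_X_pow_mul_X_pow (a b : ℕ) :
    factorialWeight (U ^ a * V ^ b) = a ! * b ! := by
  rw [MvPolynomial.X_pow_eq_monomial, MvPolynomial.X_pow_eq_monomial, MvPolynomial.monomial_mul,
    one_mul]
  simp [factorialWeight, MvPolynomial.monomial]

theorem factorialWeight_add_pow_mul_X_pow_mul_X_pow (m a b : ℕ) :
    factorialWeight ((U + V) ^ m * U ^ a * V ^ b) =
      (m + a + b + 1)! * a ! * b ! / (a + b + 1)! := by
  induction m generalizing a b with
  | zero => rw [pow_zero, one_mul, factorialWeight_X_pow_mul_X_pow]; field_simp; ring_nf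
  | succ m ih =>
    have hsplit : (U + V) ^ (m + 1) * U ^ a * V ^ b =
        (U + V) ^ m * U ^ (a + 1) * V ^ b + (U + V) ^ m * U ^ a * V ^ (b + 1) := by ring
    rw [hsplit, map_add, ih, ih, show m + (a + 1) + b + 1 = m + 1 + a + b + 1 by ring,
      show m + a + (b + 1) + 1 = m + 1 + a + b + 1 by ring,
      show a + 1 + b + 1 = a + b + 1 + 1 by ring, show a + (b + 1) + 1 = a + b + 1 + 1 by ring]
    simp only [factorial_succ, cast_mul, cast_add, cast_one]
    field_simp
    ring

theorem factorialWeight_C_mul_add_pow_mul_X_pow_mul_X_pow (c : ℚ) (m a b : ℕ) :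
    factorialWeight (MvPolynomial.C c * (U + V) ^ m * U ^ a * V ^ b) =
      c * ((m + a + b + 1)! * a ! * b ! / (a + b + 1)!) := by
  rw [mul_assoc, mul_assoc, MvPolynomial.C_mul', map_smul, smul_eq_mul, ← mul_assoc,
    factorialWeight_add_pow_mul_X_pow_mul_X_pow]

theorem factorialWeight_coeff_C_add_mul (M : ℕ) :
    factorialWeight (coeff M (C (U + V) * (rescale U 𝔹 * rescale V 𝔹))) =
      (M + 2) * ∑ p ∈ antidiagonal M, bernoulli p.1 * bernoulli p.2 := by
  rw [coeff_C_mul, coeff_mul, mul_sum, map_sum, mul_sum]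
  refine sum_congr rfl fun p hp => ?_
  have hterm : (U + V) * (coeff p.1 (rescale U 𝔹) * coeff p.2 (rescale V 𝔹)) =
      MvPolynomial.C (bernoulli p.1 / p.1 ! * (bernoulli p.2 / p.2 !)) * (U + V) ^ 1 * U ^ p.1
        * V ^ p.2 := by
    simp only [coeff_rescale_bernoulliPowerSeries, MvPolynomial.algebraMap_eq, map_mul]
    ring
  rw [hterm, factorialWeight_C_mul_add_pow_mul_X_pow_mul_X_pow, ← mem_antidiagonal.1 hp,
    show 1 + p.1 + p.2 + 1 = p.1 + p.2 + 1 + 1 by ring, factorial_succ]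
  push_cast
  field_simp
  ring

theorem factorialWeight_coeff_C_mul_X_mul (M : ℕ) :
    factorialWeight (coeff M (C (U * V) * X * rescale (U + V) 𝔹)) =
      (M + 2).choose 3 * bernoulli (M - 1) := by
  rw [mul_right_comm]
  cases M with
  | zero => simp
  | succ m =>
    have hcoeff : coeff m (C (U * V) * rescale (U + V) 𝔹) =
        MvPolynomial.C (bernoulli m / m !) * (U + V) ^ m * U ^ 1 * V ^ 1 := by
      rw [coeff_C_mul, coeff_rescale_bernoulliPowerSeries, MvPolynomial.algebraMap_eq]
      ring
    rw [coeff_succ_mul_X, hcoeff, factorialWeight_C_mul_add_pow_mul_X_pow_mul_X_pow,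
      Nat.cast_choose ℚ (show 3 ≤ m + 1 + 2 by omega), show m + 1 + 2 - 3 = m by omega,
      show m + 1 + 1 + 1 = m + 1 + 2 by ring, add_tsub_cancel_right]
    simp only [factorial, succ_eq_add_one]
    push_cast
    field_simp

theorem factorialWeight_coeff_C_X_one_mul_mul (M : ℕ) :
    factorialWeight (coeff M (C V * rescale U 𝔹 * rescale (U + V) 𝔹)) =
      ∑ p ∈ antidiagonal M,
        ((M + 2).choose (p.1 + 2) : ℚ) * bernoulli p.1 * bernoulli p.2 := by
  rw [coeff_mul, map_sum]
  refine sum_congr rfl fun p hp => ?_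
  have hterm : coeff p.1 (C V * rescale U 𝔹) * coeff p.2 (rescale (U + V) 𝔹) =
      MvPolynomial.C (bernoulli p.1 / p.1 ! * (bernoulli p.2 / p.2 !)) * (U + V) ^ p.2 * U ^ p.1
        * V ^ 1 := by
    simp only [coeff_C_mul, coeff_rescale_bernoulliPowerSeries, MvPolynomial.algebraMap_eq,
      map_mul]
    ring
  rw [hterm, factorialWeight_C_mul_add_pow_mul_X_pow_mul_X_pow, ← mem_antidiagonal.1 hp,
    show p.1 + p.2 + 2 = p.1 + 2 + p.2 by ring, Nat.cast_add_choose,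
    show p.2 + p.1 + 1 + 1 = p.1 + 2 + p.2 by ring, show p.1 + 1 + 1 = p.1 + 2 by ring,
    factorial_one, cast_one]
  field_simp

theorem factorialWeight_coeff_C_X_zero_mul_mul (M : ℕ) :
    factorialWeight (coeff M (C U * rescale V 𝔹 * rescale (U + V) 𝔹)) =
      ∑ p ∈ antidiagonal M,
        ((M + 2).choose (p.1 + 2) : ℚ) * bernoulli p.1 * bernoulli p.2 := by
  rw [coeff_mul, map_sum]
  refine sum_congr rfl fun p hp => ?_
  have hterm : coeff p.1 (C U * rescale V 𝔹) * coeff p.2 (rescale (U + V) 𝔹) =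
      MvPolynomial.C (bernoulli p.1 / p.1 ! * (bernoulli p.2 / p.2 !)) * (U + V) ^ p.2 * U ^ 1
        * V ^ p.1 := by
    simp only [coeff_C_mul, coeff_rescale_bernoulliPowerSeries, MvPolynomial.algebraMap_eq,
      map_mul]
    ring
  rw [hterm, factorialWeight_C_mul_add_pow_mul_X_pow_mul_X_pow, ← mem_antidiagonal.1 hp,
    show p.1 + p.2 + 2 = p.1 + 2 + p.2 by ring, Nat.cast_add_choose,
    show p.2 + 1 + p.1 + 1 = p.1 + 2 + p.2 by ring, show 1 + p.1 + 1 = p.1 + 2 by ring,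
    factorial_one, cast_one]
  field_simp

theorem add_two_mul_sum_antidiagonal_bernoulli_mul_bernoulli (M : ℕ) :
    (M + 2 : ℚ) * ∑ p ∈ antidiagonal M, bernoulli p.1 * bernoulli p.2 =
      2 * ∑ p ∈ antidiagonal M, ((M + 2).choose (p.1 + 2) : ℚ) * bernoulli p.1 * bernoulli p.2
        + (M + 2).choose 3 * bernoulli (M - 1) := by
  have h := congrArg (fun f => factorialWeight (coeff M f))
    (C_add_mul_rescale_bernoulliPowerSeries_mul (MvPolynomial.X_ne_zero (0 : Fin 2))
      (MvPolynomial.X_ne_zero (1 : Fin 2)))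
  rw [add_mul, add_mul] at h
  simp only [(coeff M).map_add, factorialWeight.map_add] at h
  rw [factorialWeight_coeff_C_add_mul, factorialWeight_coeff_C_mul_X_mul,
    factorialWeight_coeff_C_X_one_mul_mul, factorialWeight_coeff_C_X_zero_mul_mul] at h
  linear_combination h

end FactorialWeight

theorem sum_range_two_mul_add_one_of_odd {β : Type*} [AddCommMonoid β] (g : ℕ → β)
    (hg : ∀ i, Odd i → g i = 0) (n : ℕ) :
    ∑ i ∈ range (2 * n + 1), g i = g 0 + ∑ k ∈ Icc 1 n, g (2 * k) := by
  induction n with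
  | zero => simp
  | succ n ih =>
    rw [show 2 * (n + 1) + 1 = 2 * n + 1 + 1 + 1 by ring, sum_range_succ, sum_range_succ, ih,
      hg _ (odd_two_mul_add_one n), add_zero, sum_Icc_succ_top (by omega), add_assoc, mul_add_one]

theorem bernoulli_two_mul_sub_one {n : ℕ} (hn : 2 ≤ n) : bernoulli (2 * n - 1) = 0 :=
  bernoulli_eq_zero_of_odd ⟨n - 1, by omega⟩ (by omega)

theorem bernoulli_mul_bernoulli_two_mul_sub_of_odd {n i : ℕ} (hn : 2 ≤ n) (hi : Odd i) :
    bernoulli i * bernoulli (2 * n - i) = 0 := by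
  rcases eq_or_ne i 1 with rfl | hi1
  · rw [bernoulli_two_mul_sub_one hn, mul_zero]
  · rw [bernoulli_eq_zero_of_odd hi (lt_of_le_of_ne hi.pos hi1.symm), zero_mul]

/-- For every integer `n ≥ 2`,
`∑_{k=1}^{n} B_{2k}B_{2n-2k}
  = (1/(n+1)) ∑_{k=1}^{n} C(2n+2, 2k+2) B_{2k}B_{2n-2k} + 2n B_{2n}`
(the `p = 1` case of the one-parameter generalization of Miki's identity). -/
theorem miki_identity_p_one (n : ℕ) (hn : 2 ≤ n) :
    ∑ k ∈ Finset.Icc 1 n, bernoulli (2 * k) * bernoulli (2 * n - 2 * k)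
    = (1 / (n + 1) : ℚ) * ∑ k ∈ Finset.Icc 1 n,
        ((2 * n + 2).choose (2 * k + 2) : ℚ) * bernoulli (2 * k) * bernoulli (2 * n - 2 * k)
      + 2 * n * bernoulli (2 * n) := by
  have h := add_two_mul_sum_antidiagonal_bernoulli_mul_bernoulli (2 * n)
  rw [Nat.sum_antidiagonal_eq_sum_range_succ (fun i j => bernoulli i * bernoulli j),
    Nat.sum_antidiagonal_eq_sum_range_succ
      (fun i j => ((2 * n + 2).choose (i + 2) : ℚ) * bernoulli i * bernoulli j),
    sum_range_two_mul_add_one_of_odd _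
      (fun i hi => bernoulli_mul_bernoulli_two_mul_sub_of_odd hn hi),
    sum_range_two_mul_add_one_of_odd _ (fun i hi => by
      rw [mul_assoc, bernoulli_mul_bernoulli_two_mul_sub_of_odd hn hi, mul_zero]),
    bernoulli_two_mul_sub_one hn] at h
  simp only [bernoulli_zero, one_mul, Nat.sub_zero, zero_add, Nat.cast_choose_two, mul_zero,
    add_zero] at h
  push_cast at h
  field_simp
  linear_combination h / 2
end
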